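/- Let A be an abelian group and let π₁, π₂, π₃, π₄ be additive endomorphisms of A that are idempotent, pairwise orthogonal (πᵢ∘πⱼ = 0 for i ≠ j) and satisfy π₁ + π₂ + π₃ + π₄ = id. Let s ∈ A with π₁(s) = 0 and π₂(s) = 0. Then the binary operation a * b := π₁(b) + π₂(a) + π₃(a) + π₃(b) + s on A is associative and distributes over the heap bracket: a * (b − c + d) = a*b − a*c + a*d and (a − b + c) * d = a*d − b*d + c*d for all a, b, c, d ∈ A. -/

import Mathlib

/-!
The components of a product are `π₁ (a * b) = π₁ b`, `π₂ (a * b) = π₂ a` and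
`π₃ (a * b) = π₃ a + π₃ b + π₃ s`, so both bracketings of `a * b * c` have the same expansion.
Distributivity over the heap bracket holds because `a * b` is an additive map of `b` plus a
constant depending on `a`, and symmetrically in `a`.
-/

section TrussMul

variable {A : Type*} [AddCommGroup A] (π₁ π₂ π₃ : A →+ A) (s : A)

def trussMul (a b : A) : A := π₁ b + π₂ a + π₃ a + π₃ b + s

theorem trussMul_sub_add_right (a b c d : A) :
    trussMul π₁ π₂ π₃ s a (b - c + d) =
      trussMul π₁ π₂ π₃ s a b - trussMul π₁ π₂ π₃ s a c + trussMul π₁ π₂ π₃ s a d := by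
  simp only [trussMul, map_add, map_sub]
  abel

theorem trussMul_sub_add_left (a b c d : A) :
    trussMul π₁ π₂ π₃ s (a - b + c) d =
      trussMul π₁ π₂ π₃ s a d - trussMul π₁ π₂ π₃ s b d + trussMul π₁ π₂ π₃ s c d := by
  simp only [trussMul, map_add, map_sub]
  abel

theorem proj₁_trussMul (h₁ : ∀ a, π₁ (π₁ a) = π₁ a) (h₁₂ : ∀ a, π₁ (π₂ a) = 0)
    (h₁₃ : ∀ a, π₁ (π₃ a) = 0) (hs₁ : π₁ s = 0) (a b : A) :
    π₁ (trussMul π₁ π₂ π₃ s a b) = π₁ b := by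
  simp only [trussMul, map_add, h₁, h₁₂, h₁₃, hs₁, add_zero]

theorem proj₂_trussMul (h₂ : ∀ a, π₂ (π₂ a) = π₂ a) (h₂₁ : ∀ a, π₂ (π₁ a) = 0)
    (h₂₃ : ∀ a, π₂ (π₃ a) = 0) (hs₂ : π₂ s = 0) (a b : A) :
    π₂ (trussMul π₁ π₂ π₃ s a b) = π₂ a := by
  simp only [trussMul, map_add, h₂, h₂₁, h₂₃, hs₂, zero_add, add_zero]

theorem proj₃_trussMul (h₃ : ∀ a, π₃ (π₃ a) = π₃ a) (h₃₁ : ∀ a, π₃ (π₁ a) = 0)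
    (h₃₂ : ∀ a, π₃ (π₂ a) = 0) (a b : A) :
    π₃ (trussMul π₁ π₂ π₃ s a b) = π₃ a + π₃ b + π₃ s := by
  simp only [trussMul, map_add, h₃, h₃₁, h₃₂, zero_add]

theorem trussMul_assoc
    (h₁ : ∀ a, π₁ (π₁ a) = π₁ a) (h₂ : ∀ a, π₂ (π₂ a) = π₂ a) (h₃ : ∀ a, π₃ (π₃ a) = π₃ a)
    (h₁₂ : ∀ a, π₁ (π₂ a) = 0) (h₂₁ : ∀ a, π₂ (π₁ a) = 0)
    (h₁₃ : ∀ a, π₁ (π₃ a) = 0) (h₃₁ : ∀ a, π₃ (π₁ a) = 0)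
    (h₂₃ : ∀ a, π₂ (π₃ a) = 0) (h₃₂ : ∀ a, π₃ (π₂ a) = 0)
    (hs₁ : π₁ s = 0) (hs₂ : π₂ s = 0) (a b c : A) :
    trussMul π₁ π₂ π₃ s (trussMul π₁ π₂ π₃ s a b) c =
      trussMul π₁ π₂ π₃ s a (trussMul π₁ π₂ π₃ s b c) := by
  conv_lhs => rw [trussMul]
  conv_rhs => rw [trussMul]
  rw [proj₁_trussMul π₁ π₂ π₃ s h₁ h₁₂ h₁₃ hs₁,
    proj₂_trussMul π₁ π₂ π₃ s h₂ h₂₁ h₂₃ hs₂, proj₃_trussMul π₁ π₂ π₃ s h₃ h₃₁ h₃₂,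
    proj₃_trussMul π₁ π₂ π₃ s h₃ h₃₁ h₃₂]
  abel

end TrussMul

theorem zero_mult_truss_general {A : Type*} [AddCommGroup A]
    (π₁ π₂ π₃ : A →+ A)
    (h₁ : ∀ a : A, π₁ (π₁ a) = π₁ a) (h₂ : ∀ a : A, π₂ (π₂ a) = π₂ a)
    (h₃ : ∀ a : A, π₃ (π₃ a) = π₃ a)
    (h₁₂ : ∀ a : A, π₁ (π₂ a) = 0) (h₂₁ : ∀ a : A, π₂ (π₁ a) = 0)
    (h₁₃ : ∀ a : A, π₁ (π₃ a) = 0) (h₃₁ : ∀ a : A, π₃ (π₁ a) = 0)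
    (h₂₃ : ∀ a : A, π₂ (π₃ a) = 0) (h₃₂ : ∀ a : A, π₃ (π₂ a) = 0)
    (s : A) (hs₁ : π₁ s = 0) (hs₂ : π₂ s = 0) :
    (∀ a b c : A,
      π₁ c + π₂ (π₁ b + π₂ a + π₃ a + π₃ b + s)
        + π₃ (π₁ b + π₂ a + π₃ a + π₃ b + s) + π₃ c + s
      = π₁ (π₁ c + π₂ b + π₃ b + π₃ c + s) + π₂ a + π₃ a
        + π₃ (π₁ c + π₂ b + π₃ b + π₃ c + s) + s) ∧
    (∀ a b c d : A,
      π₁ (b - c + d) + π₂ a + π₃ a + π₃ (b - c + d) + s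
        = (π₁ b + π₂ a + π₃ a + π₃ b + s) - (π₁ c + π₂ a + π₃ a + π₃ c + s)
            + (π₁ d + π₂ a + π₃ a + π₃ d + s)) ∧
    (∀ a b c d : A,
      π₁ d + π₂ (a - b + c) + π₃ (a - b + c) + π₃ d + s
        = (π₁ d + π₂ a + π₃ a + π₃ d + s) - (π₁ d + π₂ b + π₃ b + π₃ d + s)
            + (π₁ d + π₂ c + π₃ c + π₃ d + s)) :=
  ⟨trussMul_assoc π₁ π₂ π₃ s h₁ h₂ h₃ h₁₂ h₂₁ h₁₃ h₃₁ h₂₃ h₃₂ hs₁ hs₂,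
    trussMul_sub_add_right π₁ π₂ π₃ s, trussMul_sub_add_left π₁ π₂ π₃ s⟩

/-- Given a decomposition of an abelian group `A` into four summands by
orthogonal idempotent projections `π₁, π₂, π₃, π₄` summing to the identity, and
`s ∈ A` with `π₁(s) = 0 = π₂(s)`, the operation
`a * b = π₁(b) + π₂(a) + π₃(a) + π₃(b) + s` is associative and distributes over
the heap bracket. -/
theorem zero_mult_truss {A : Type*} [AddCommGroup A]
    (π₁ π₂ π₃ π₄ : A →+ A)
    (h₁ : ∀ a : A, π₁ (π₁ a) = π₁ a) (h₂ : ∀ a : A, π₂ (π₂ a) = π₂ a)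
    (h₃ : ∀ a : A, π₃ (π₃ a) = π₃ a) (h₄ : ∀ a : A, π₄ (π₄ a) = π₄ a)
    (h₁₂ : ∀ a : A, π₁ (π₂ a) = 0) (h₂₁ : ∀ a : A, π₂ (π₁ a) = 0)
    (h₁₃ : ∀ a : A, π₁ (π₃ a) = 0) (h₃₁ : ∀ a : A, π₃ (π₁ a) = 0)
    (h₁₄ : ∀ a : A, π₁ (π₄ a) = 0) (h₄₁ : ∀ a : A, π₄ (π₁ a) = 0)
    (h₂₃ : ∀ a : A, π₂ (π₃ a) = 0) (h₃₂ : ∀ a : A, π₃ (π₂ a) = 0)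
    (h₂₄ : ∀ a : A, π₂ (π₄ a) = 0) (h₄₂ : ∀ a : A, π₄ (π₂ a) = 0)
    (h₃₄ : ∀ a : A, π₃ (π₄ a) = 0) (h₄₃ : ∀ a : A, π₄ (π₃ a) = 0)
    (hsum : ∀ a : A, π₁ a + π₂ a + π₃ a + π₄ a = a)
    (s : A) (hs₁ : π₁ s = 0) (hs₂ : π₂ s = 0) :
    (∀ a b c : A,
      π₁ c + π₂ (π₁ b + π₂ a + π₃ a + π₃ b + s)
        + π₃ (π₁ b + π₂ a + π₃ a + π₃ b + s) + π₃ c + s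
      = π₁ (π₁ c + π₂ b + π₃ b + π₃ c + s) + π₂ a + π₃ a
        + π₃ (π₁ c + π₂ b + π₃ b + π₃ c + s) + s) ∧
    (∀ a b c d : A,
      π₁ (b - c + d) + π₂ a + π₃ a + π₃ (b - c + d) + s
        = (π₁ b + π₂ a + π₃ a + π₃ b + s) - (π₁ c + π₂ a + π₃ a + π₃ c + s)
            + (π₁ d + π₂ a + π₃ a + π₃ d + s)) ∧
    (∀ a b c d : A,
      π₁ d + π₂ (a - b + c) + π₃ (a - b + c) + π₃ d + s
        = (π₁ d + π₂ a + π₃ a + π₃ d + s) - (π₁ d + π₂ b + π₃ b + π₃ d + s)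
            + (π₁ d + π₂ c + π₃ c + π₃ d + s)) :=
  zero_mult_truss_general π₁ π₂ π₃ h₁ h₂ h₃ h₁₂ h₂₁ h₁₃ h₃₁ h₂₃ h₃₂ s hs₁ hs₂
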